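/- The transpose λ' of a partition λ = (α_1+1, …, α_p+1 | α_1, …, α_p) in Frobenius notation (α_1 > ⋯ > α_p ≥ 0) is an even partition if and only if p is even, α_1, α_3, …, α_{p−1} are all odd, and α_{2i−1} − α_{2i} = 1 for all i = 1,…,p/2. -/

import Mathlib

/-! A column of length `2j + 1` ends between rows `2j` and `2j + 1`, so the columns of a Young
diagram are all even exactly when its rows come in equal pairs `λ_{2j} = λ_{2j+1}`. In the
Durfee square the row and column lengths are read off `α`: the columns `i < p` are even iff
`α i + i` is odd, and the pairing of the rows `2j + 1 < p` is the gap condition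
`α_{2j} = α_{2j+1} + 1`. An odd `p` would leave the row `p - 1`, longer than `p`, paired with the
row `p`, of length at most `p`. Conversely every column `c ≥ p` has length at most `p`, so with
`p` even an odd length `2j + 1` would fall inside the Durfee square, between two rows paired by
the gap condition. -/

namespace YoungDiagram

theorem colLen_eq_succ_iff (μ : YoungDiagram) (i c : ℕ) :
    μ.colLen c = i + 1 ↔ μ.rowLen (i + 1) ≤ c ∧ c < μ.rowLen i := by
  rw [← mem_iff_lt_rowLen, ← not_lt, ← mem_iff_lt_rowLen, mem_iff_lt_colLen, mem_iff_lt_colLen]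
  omega

theorem rowLen_two_mul_succ_eq_of_even_colLen {μ : YoungDiagram}
    (h : ∀ c, Even (μ.colLen c)) (j : ℕ) : μ.rowLen (2 * j + 1) = μ.rowLen (2 * j) := by
  refine le_antisymm (μ.rowLen_anti _ _ (by omega)) (not_lt.1 fun hlt => ?_)
  have hcol : μ.colLen (μ.rowLen (2 * j + 1)) = 2 * j + 1 :=
    (μ.colLen_eq_succ_iff _ _).2 ⟨le_rfl, hlt⟩
  exact Nat.not_even_iff_odd.2 (odd_two_mul_add_one j) (hcol ▸ h _)

end YoungDiagram

theorem odd_apply_add_val_of_gap {p : ℕ} {α : Fin p → ℕ}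
    (hodd : ∀ i : Fin p, Even (i : ℕ) → Odd (α i))
    (hgap : ∀ j : ℕ, ∀ h : 2 * j + 1 < p, α ⟨2 * j, Nat.lt_of_succ_lt h⟩ = α ⟨2 * j + 1, h⟩ + 1)
    (i : Fin p) : Odd (α i + i) := by
  rcases Nat.even_or_odd (i : ℕ) with hi | ⟨j, hj⟩
  · exact (hodd i hi).add_even hi
  · obtain ⟨i, hip⟩ := i
    subst hj
    have hα := hodd ⟨2 * j, by omega⟩ (even_two_mul j)
    rw [hgap j hip] at hα
    simp only [Nat.odd_iff] at hα ⊢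
    omega

/-- the transpose of a partition `λ = (α₁+1, …, α_p+1 | α₁, …, α_p)` in
Frobenius notation (realized as a Young diagram `μ` with Durfee square of size `p`,
0-based row lengths `α i + i + 2` and column lengths `α i + i + 1`) is an even
partition if and only if `p` is even, `α₁, α₃, …, α_{p−1}` (0-based: the `α` at even
indices) are all odd, and `α_{2i−1} − α_{2i} = 1` for all `i = 1, …, p/2`. -/
theorem frobenius_transpose_even_iff (p : ℕ) (α : Fin p → ℕ)
    (μ : YoungDiagram)
    (hdur : (p, p) ∉ μ)
    (hrow : ∀ i : Fin p, μ.rowLen i = α i + i + 2)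
    (hcol : ∀ i : Fin p, μ.colLen i = α i + i + 1) :
    (∀ i : ℕ, Even (μ.transpose.rowLen i)) ↔
      (Even p ∧ (∀ i : Fin p, Even (i : ℕ) → Odd (α i)) ∧
        (∀ j : ℕ, ∀ h : 2 * j + 1 < p, α ⟨2 * j, by omega⟩ = α ⟨2 * j + 1, h⟩ + 1)) := by
  simp only [YoungDiagram.rowLen_transpose]
  have hcol_even (i : Fin p) : Even (μ.colLen i) ↔ Odd (α i + i) := by
    rw [hcol i, Nat.even_add_one, Nat.not_even_iff_odd]
  have hrow' (i : ℕ) (hi : i < p) : μ.rowLen i = α ⟨i, hi⟩ + i + 2 := hrow ⟨i, hi⟩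
  have hrow_p : μ.rowLen p ≤ p := not_lt.1 (mt YoungDiagram.mem_iff_lt_rowLen.2 hdur)
  constructor
  · intro h
    have hpairs := YoungDiagram.rowLen_two_mul_succ_eq_of_even_colLen h
    refine ⟨?_, fun i hi => ?_, fun j hj => ?_⟩
    · by_contra hp
      obtain ⟨j, rfl⟩ := Nat.not_even_iff_odd.1 hp
      have := hrow' (2 * j) (by omega)
      have := hpairs j
      omega
    · have := (hcol_even i).1 (h i)
      simp only [Nat.odd_iff, Nat.even_iff] at this hi ⊢
      omega
    · have := hpairs j
      rw [hrow' (2 * j) (by omega), hrow' (2 * j + 1) hj] at this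
      omega
  · rintro ⟨hp, hodd, hgap⟩ c
    by_cases hc : c < p
    · exact (hcol_even ⟨c, hc⟩).2 (odd_apply_add_val_of_gap hodd hgap _)
    · by_contra hc_odd
      obtain ⟨j, hj⟩ := Nat.not_even_iff_odd.1 hc_odd
      have hle : μ.colLen c ≤ p := (μ.colLen_anti p c (not_lt.1 hc)).trans
        (not_lt.1 (mt YoungDiagram.mem_iff_lt_colLen.2 hdur))
      have hjp : 2 * j + 1 < p := by
        obtain ⟨k, rfl⟩ := hp
        omega
      have hbetween := (μ.colLen_eq_succ_iff _ _).1 hj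
      rw [hrow' (2 * j) (by omega), hrow' (2 * j + 1) hjp, hgap j hjp] at hbetween
      omega
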